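/- There exists a constant $C > 0$ such that for all $\lambda > 1$, $0 < r \le 1/4$ with $\lambda r < \lambda^{-1}$, and all integers $n$: the $L^{2,1}$ norm of $z \mapsto z^n$ on the annulus $B_{\lambda^{-1}} \setminus B_{\lambda r} \subset \mathbb{C}$ satisfies $\|z^n\|_{L^{2,1}(B_{\lambda^{-1}} \setminus B_{\lambda r})} \le C (\lambda r)^{n+1}$ if $n \le -2$, $\le C \lambda^{-(n+1)}$ if $n \ge 0$, and $\le C |\ln r|$ if $n = -1$. -/

import Mathlib

/-!
On the annulus `a ≤ ‖z‖ < b`, the superlevel set `{t ≤ ‖z ^ n‖}` lies in a disc of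
radius `b` when `n ≥ 0`, of radius `min b (t ^ (1 / n))` when `n < 0`, and is empty once
`t` exceeds the supremum of `‖z ^ n‖`. Since a disc of radius `ρ` has
`|D_ρ| ^ (1/2) = √π ρ`, the Lorentz norm is bounded by `√π` times the integral of that
radius over `t`, which is elementary: `b ^ (n + 1)`, `n / (n + 1) * a ^ (n + 1)` and
`1 + log (b / a)` in the three cases.
-/

open MeasureTheory Metric Set ENNReal

/-- Lorentz `L^{2,1}` norm of a function on `U ⊆ ℂ`. -/
noncomputable def lorentz21 (U : Set ℂ) (f : ℂ → ℂ) : ℝ≥0∞ :=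
  ∫⁻ t in Set.Ioi (0 : ℝ), (volume {z : ℂ | z ∈ U ∧ t ≤ ‖f z‖}) ^ (1/2 : ℝ)

theorem volume_rpow_half_le_of_subset_closedBall {S : Set ℂ} {R : ℝ}
    (h : S ⊆ closedBall 0 R) :
    volume S ^ (1/2 : ℝ) ≤ ENNReal.ofReal √Real.pi * ENNReal.ofReal R := by
  calc volume S ^ (1/2 : ℝ) ≤ volume (closedBall (0 : ℂ) R) ^ (1/2 : ℝ) :=
        ENNReal.rpow_le_rpow (measure_mono h) (by norm_num)
    _ = ENNReal.ofReal √Real.pi * ENNReal.ofReal R := by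
        rw [Complex.volume_closedBall, ENNReal.mul_rpow_of_nonneg _ _ (by norm_num),
          ← ENNReal.rpow_natCast, ← ENNReal.rpow_mul, ← ENNReal.ofReal_coe_nnreal,
          NNReal.coe_real_pi, ENNReal.ofReal_rpow_of_nonneg Real.pi_pos.le (by norm_num),
          ← Real.sqrt_eq_rpow, mul_comm]
        norm_num

theorem lorentz21_le_of_superlevel_subset_closedBall {U : Set ℂ} {f : ℂ → ℂ} {T : ℝ}
    {ρ : ℝ → ℝ} (hbdd : ∀ z ∈ U, ‖f z‖ ≤ T)
    (hsub : ∀ t ∈ Ioc 0 T, {z | z ∈ U ∧ t ≤ ‖f z‖} ⊆ closedBall 0 (ρ t)) :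
    lorentz21 U f ≤ ENNReal.ofReal √Real.pi * ∫⁻ t in Ioc 0 T, ENNReal.ofReal (ρ t) := by
  have hbound : ∀ t ∈ Ioi (0 : ℝ), volume {z | z ∈ U ∧ t ≤ ‖f z‖} ^ (1/2 : ℝ) ≤
      (Ioc 0 T).indicator (fun t => ENNReal.ofReal √Real.pi * ENNReal.ofReal (ρ t)) t := by
    intro t ht
    by_cases htT : t ≤ T
    · rw [indicator_of_mem (show t ∈ Ioc 0 T from ⟨ht, htT⟩)]
      exact volume_rpow_half_le_of_subset_closedBall (hsub t ⟨ht, htT⟩)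
    · have hempty : {z | z ∈ U ∧ t ≤ ‖f z‖} = ∅ :=
        eq_empty_of_forall_notMem fun z ⟨hz, hzt⟩ => htT (hzt.trans (hbdd z hz))
      simp [hempty]
  calc lorentz21 U f
      ≤ ∫⁻ t in Ioi 0,
          (Ioc 0 T).indicator (fun t => ENNReal.ofReal √Real.pi * ENNReal.ofReal (ρ t)) t :=
        setLIntegral_mono' measurableSet_Ioi hbound
    _ = ENNReal.ofReal √Real.pi * ∫⁻ t in Ioc 0 T, ENNReal.ofReal (ρ t) := by
        rw [lintegral_indicator measurableSet_Ioc, Measure.restrict_restrict measurableSet_Ioc,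
          inter_eq_self_of_subset_left Ioc_subset_Ioi_self,
          lintegral_const_mul' _ _ ENNReal.ofReal_ne_top]

theorem lintegral_Ioc_rpow {T p : ℝ} (hT : 0 ≤ T) (hp : -1 < p) :
    ∫⁻ t in Ioc 0 T, ENNReal.ofReal (t ^ p) = ENNReal.ofReal (T ^ (p + 1) / (p + 1)) := by
  have hint : IntegrableOn (fun t : ℝ => t ^ p) (Ioc 0 T) := by
    simpa [intervalIntegrable_iff, uIoc_of_le hT] using
      intervalIntegral.intervalIntegrable_rpow' (a := 0) (b := T) hp
  rw [← ofReal_integral_eq_lintegral_ofReal hint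
      ((ae_restrict_iff' measurableSet_Ioc).2
        (ae_of_all _ fun t ht => Real.rpow_nonneg ht.1.le p)),
    ← intervalIntegral.integral_of_le hT, integral_rpow (Or.inl hp),
    Real.zero_rpow (by linarith), sub_zero]

theorem lintegral_Ioc_inv {a b : ℝ} (ha : 0 < a) (hab : a ≤ b) :
    ∫⁻ t in Ioc a b, ENNReal.ofReal t⁻¹ = ENNReal.ofReal (Real.log (b / a)) := by
  have hzero : (0 : ℝ) ∉ uIcc a b := by
    rw [uIcc_of_le hab]
    exact fun h => ha.not_ge h.1
  have hint : IntegrableOn (fun t : ℝ => t⁻¹) (Ioc a b) := by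
    simpa [intervalIntegrable_iff, uIoc_of_le hab] using
      intervalIntegral.intervalIntegrable_inv (μ := volume) (fun x hx h => hzero (h ▸ hx))
        continuousOn_id
  rw [← ofReal_integral_eq_lintegral_ofReal hint
      ((ae_restrict_iff' measurableSet_Ioc).2 (ae_of_all _ fun t ht =>
        inv_nonneg.2 (ha.trans ht.1).le)),
    ← intervalIntegral.integral_of_le hab, integral_inv hzero]

theorem lintegral_Ioc_min_inv_le {b T : ℝ} (hb : 0 < b) (hT : b⁻¹ ≤ T) :
    ∫⁻ t in Ioc 0 T, ENNReal.ofReal (min b t⁻¹)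
      ≤ ENNReal.ofReal (1 + Real.log (b * T)) := by
  have hbinv : 0 < b⁻¹ := inv_pos.2 hb
  rw [← Ioc_union_Ioc_eq_Ioc hbinv.le hT,
    lintegral_union measurableSet_Ioc (Ioc_disjoint_Ioc_of_le le_rfl)]
  calc (∫⁻ t in Ioc 0 b⁻¹, ENNReal.ofReal (min b t⁻¹)) +
        ∫⁻ t in Ioc b⁻¹ T, ENNReal.ofReal (min b t⁻¹)
      ≤ (∫⁻ t in Ioc 0 b⁻¹, ENNReal.ofReal b) +
          ∫⁻ t in Ioc b⁻¹ T, ENNReal.ofReal t⁻¹ := by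
        gcongr <;> simp
    _ = ENNReal.ofReal (1 + Real.log (b * T)) := by
        rw [setLIntegral_const, Real.volume_Ioc, sub_zero, ← ENNReal.ofReal_mul hb.le,
          mul_inv_cancel₀ hb.ne', lintegral_Ioc_inv hbinv hT, div_inv_eq_mul, mul_comm T,
          ← ENNReal.ofReal_add zero_le_one (Real.log_nonneg ?_)]
        calc 1 = b * b⁻¹ := (mul_inv_cancel₀ hb.ne').symm
          _ ≤ b * T := by gcongr

section Annulus

variable {a b : ℝ} {n : ℤ} {z : ℂ}

theorem norm_lt_of_mem_annulus (hz : z ∈ ball (0 : ℂ) b \ ball 0 a) : ‖z‖ < b :=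
  mem_ball_zero_iff.1 hz.1

theorem le_norm_of_mem_annulus (hz : z ∈ ball (0 : ℂ) b \ ball 0 a) : a ≤ ‖z‖ :=
  not_lt.1 fun h => hz.2 (mem_ball_zero_iff.2 h)

theorem norm_le_rpow_inv_of_le_norm_zpow {t : ℝ} (hn : n < 0) (ht : 0 < t)
    (h : t ≤ ‖z ^ n‖) : ‖z‖ ≤ t ^ (n : ℝ)⁻¹ := by
  rw [norm_zpow, ← Real.rpow_intCast] at h
  calc ‖z‖ = (‖z‖ ^ (n : ℝ)) ^ (n : ℝ)⁻¹ :=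
        (Real.rpow_rpow_inv (norm_nonneg z) (by exact_mod_cast hn.ne)).symm
    _ ≤ t ^ (n : ℝ)⁻¹ :=
        Real.rpow_le_rpow_of_nonpos ht h (inv_nonpos.2 (by exact_mod_cast hn.le))

theorem lorentz21_annulus_zpow_of_nonneg (hn : 0 ≤ n) (hb : 0 < b) :
    lorentz21 (ball (0 : ℂ) b \ ball 0 a) (· ^ n)
      ≤ ENNReal.ofReal (√Real.pi * b ^ (n + 1)) := by
  refine (lorentz21_le_of_superlevel_subset_closedBall (T := b ^ n) (ρ := fun _ => b)
    (fun z hz => ?_) fun t _ z hz =>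
      mem_closedBall_zero_iff.2 (norm_lt_of_mem_annulus hz.1).le).trans_eq ?_
  · rw [norm_zpow]
    exact zpow_le_zpow_left₀ hn (norm_nonneg z) (norm_lt_of_mem_annulus hz).le
  · rw [setLIntegral_const, Real.volume_Ioc, sub_zero, ← ENNReal.ofReal_mul hb.le,
      ← ENNReal.ofReal_mul (Real.sqrt_nonneg _), zpow_add_one₀ hb.ne', mul_comm b]

theorem lorentz21_annulus_zpow_of_le_neg_two (hn : n ≤ -2) (ha : 0 < a) :
    lorentz21 (ball (0 : ℂ) b \ ball 0 a) (· ^ n)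
      ≤ ENNReal.ofReal (√Real.pi * (n / (n + 1)) * a ^ (n + 1)) := by
  have hnR : (n : ℝ) ≤ -2 := by exact_mod_cast hn
  refine (lorentz21_le_of_superlevel_subset_closedBall (T := a ^ n)
    (ρ := fun t => t ^ (n : ℝ)⁻¹)
    (fun z hz => ?_) fun t ht z hz => mem_closedBall_zero_iff.2
      (norm_le_rpow_inv_of_le_norm_zpow (by omega) ht.1 hz.2)).trans_eq ?_
  · rw [norm_zpow, ← Real.rpow_intCast, ← Real.rpow_intCast]
    exact Real.rpow_le_rpow_of_nonpos ha (le_norm_of_mem_annulus hz) (by linarith)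
  · have hp : -1 < (n : ℝ)⁻¹ := by
      rw [neg_lt, ← inv_neg, inv_lt_one₀ (by linarith)]
      linarith
    have hpow : (a ^ n) ^ ((n : ℝ)⁻¹ + 1) = a ^ (n + 1) := by
      rw [← Real.rpow_intCast, ← Real.rpow_mul ha.le, ← Real.rpow_intCast, mul_add,
        mul_inv_cancel₀ (by linarith), mul_one, add_comm]
      push_cast
      rfl
    rw [lintegral_Ioc_rpow (by positivity) hp, ← ENNReal.ofReal_mul (Real.sqrt_nonneg _), hpow]
    have hn0 : (n : ℝ) ≠ 0 := by linarith
    have hn1 : (n : ℝ) + 1 ≠ 0 := by linarith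
    congr 1
    field_simp
    rw [add_comm 1, div_self hn1]

theorem lorentz21_annulus_inv (ha : 0 < a) (hab : a ≤ b) :
    lorentz21 (ball (0 : ℂ) b \ ball 0 a) (· ^ (-1 : ℤ))
      ≤ ENNReal.ofReal (√Real.pi * (1 + Real.log (b / a))) := by
  have hb : 0 < b := ha.trans_le hab
  refine (lorentz21_le_of_superlevel_subset_closedBall (T := a⁻¹) (ρ := fun t => min b t⁻¹)
    (fun z hz => ?_) fun t ht z hz => mem_closedBall_zero_iff.2 (le_min
      (norm_lt_of_mem_annulus hz.1).le ?_)).trans ?_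
  · rw [norm_zpow, zpow_neg_one]
    exact inv_anti₀ ha (le_norm_of_mem_annulus hz)
  · simpa [Real.rpow_neg_one] using norm_le_rpow_inv_of_le_norm_zpow (by norm_num) ht.1 hz.2
  · rw [ENNReal.ofReal_mul (Real.sqrt_nonneg _), div_eq_mul_inv]
    gcongr
    exact lintegral_Ioc_min_inv_le hb (inv_anti₀ ha hab)

end Annulus

theorem one_add_log_div_le_two_mul_abs_log {lam r : ℝ} (hlam : 1 ≤ lam) (hr : 0 < r)
    (hr4 : r ≤ 1 / 4) : 1 + Real.log (lam⁻¹ / (lam * r)) ≤ 2 * |Real.log r| := by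
  have hlam0 : 0 < lam := zero_lt_one.trans_le hlam
  have hquotient : Real.log (lam⁻¹ / (lam * r)) ≤ -Real.log r := by
    rw [← Real.log_inv]
    refine Real.log_le_log (by positivity) ?_
    calc lam⁻¹ / (lam * r) = r⁻¹ / lam ^ 2 := by field_simp
      _ ≤ r⁻¹ := div_le_self (inv_nonneg.2 hr.le) (one_le_pow₀ hlam)
  have hone : 1 ≤ -Real.log r := by
    have h4 : Real.log r ≤ -Real.log 4 := by
      rw [← Real.log_inv]
      exact Real.log_le_log hr (by linarith)
    have : 1 ≤ Real.log 4 := by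
      rw [Real.le_log_iff_exp_le (by norm_num)]
      linarith [Real.exp_one_lt_d9]
    linarith
  rw [abs_of_neg (by linarith)]
  linarith

/-- `L^{2,1}` norms of the monomials `z^n` on the annulus `B_{λ⁻¹} \ B_{λr}`:
bounded by `C(λr)^{n+1}` for `n ≤ -2`, by `Cλ^{-(n+1)}` for `n ≥ 0`, and by
`C|ln r|` for `n = -1`. -/
theorem stmt5 :
    ∃ C : ℝ, 0 < C ∧ ∀ (lam r : ℝ) (n : ℤ), 1 < lam → 0 < r → r ≤ 1/4 → lam * r < lam⁻¹ →
      (n ≤ -2 →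
        lorentz21 (ball (0:ℂ) lam⁻¹ \ ball (0:ℂ) (lam * r)) (fun z => z ^ n)
          ≤ ENNReal.ofReal (C * (lam * r) ^ (n + 1))) ∧
      (0 ≤ n →
        lorentz21 (ball (0:ℂ) lam⁻¹ \ ball (0:ℂ) (lam * r)) (fun z => z ^ n)
          ≤ ENNReal.ofReal (C * lam ^ (-(n + 1)))) ∧
      (n = -1 →
        lorentz21 (ball (0:ℂ) lam⁻¹ \ ball (0:ℂ) (lam * r)) (fun z => z ^ n)
          ≤ ENNReal.ofReal (C * |Real.log r|)) := by
  refine ⟨2 * √Real.pi, by positivity, fun lam r n hlam hr hr4 hlr =>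
    ⟨fun hn => ?_, fun hn => ?_, fun hn => ?_⟩⟩
  · have hquot : (n : ℝ) / (n + 1) ≤ 2 := by
      have : (n : ℝ) ≤ -2 := by exact_mod_cast hn
      rw [div_le_iff_of_neg (by linarith)]
      linarith
    refine (lorentz21_annulus_zpow_of_le_neg_two hn (by positivity)).trans
      (ENNReal.ofReal_le_ofReal ?_)
    rw [mul_comm 2]
    gcongr
  · refine (lorentz21_annulus_zpow_of_nonneg hn (by positivity)).trans
      (ENNReal.ofReal_le_ofReal ?_)
    rw [inv_zpow']
    gcongr ?_ * _
    linarith [Real.sqrt_nonneg Real.pi]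
  · subst hn
    refine (lorentz21_annulus_inv (by positivity) hlr.le).trans (ENNReal.ofReal_le_ofReal ?_)
    rw [mul_comm 2, mul_assoc]
    exact mul_le_mul_of_nonneg_left (one_add_log_div_le_two_mul_abs_log hlam.le hr hr4)
      (Real.sqrt_nonneg _)
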